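/- arXiv:2103.02214 — 2 statements merged into one kernel-verified Lean document; each statement's English description precedes it below -/
import Mathlib

section
/- The Determinant Mutual Information DMI(X;Y) = |det(U_{X,Y})| is information-monotone: if X' is conditionally independent of Y given X, then |det(U_{X',Y})| ≤ |det(U_{X,Y})|. -/
/-!
Conditional independence of `X'` and `Y` given `X` says exactly that the joint matrix factors
through the channel from `X` to `X'`: `U_{X',Y} = T * U_{X,Y}` with `T a x = P(X' = a | X = x)`.
The channel has nonnegative entries and column sums at most one, and expanding the determinant
over permutations bounds `|det T|` by the product of its column sums, so
`|det U_{X',Y}| = |det T| * |det U_{X,Y}| ≤ |det U_{X,Y}|`.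
-/

open Finset

namespace Matrix

variable {n R : Type*} [Fintype n] [DecidableEq n]
  [CommRing R] [LinearOrder R] [IsStrictOrderedRing R]

/-- The sum over all maps `n → n` of `∏ i, A (f i) i` contains the Leibniz terms. -/
theorem abs_det_le_prod_sum_col (A : Matrix n n R) (hA : ∀ i j, 0 ≤ A i j) :
    |A.det| ≤ ∏ j, ∑ i, A i j := by
  have hprod : ∀ f : n → n, 0 ≤ ∏ i, A (f i) i := fun f => prod_nonneg fun i _ => hA _ _
  calc |A.det|
      ≤ ∑ σ : Equiv.Perm n, |Equiv.Perm.sign σ • ∏ i, A (σ i) i| := by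
        rw [det_apply]
        exact abs_sum_le_sum_abs _ _
    _ = ∑ f ∈ univ.image (fun σ : Equiv.Perm n => ⇑σ), ∏ i, A (f i) i := by
        rw [sum_image fun σ _ τ _ h => Equiv.coe_fn_injective h]
        refine sum_congr rfl fun σ _ => ?_
        rw [Units.smul_def, abs_zsmul, Equiv.Perm.sign_abs, one_smul, abs_of_nonneg (hprod σ)]
    _ ≤ ∑ f : n → n, ∏ i, A (f i) i :=
        sum_le_sum_of_subset_of_nonneg (subset_univ _) fun f _ _ => hprod f
    _ = ∏ j, ∑ i, A i j := by
        rw [prod_univ_sum, Fintype.piFinset_univ]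

theorem abs_det_le_one_of_sum_col_le_one (A : Matrix n n R) (hA : ∀ i j, 0 ≤ A i j)
    (hcol : ∀ j, ∑ i, A i j ≤ 1) : |A.det| ≤ 1 :=
  (A.abs_det_le_prod_sum_col hA).trans <|
    prod_le_one (fun j _ => sum_nonneg fun i _ => hA i j) fun j _ => hcol j

end Matrix

section Channel

variable {α β γ : Type*} [Fintype α] [Fintype γ]

/-- For a joint pmf `p a x c` of `(X', X, Y)`, the entry `(a, x)` is `P(X' = a | X = x)`;
the column of an `x` with `P(X = x) = 0` is zero, by `x / 0 = 0`. -/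
noncomputable def channel (p : α → β → γ → ℝ) : Matrix α β ℝ :=
  Matrix.of fun a x => (∑ c, p a x c) / ∑ b, ∑ c, p b x c

variable {p : α → β → γ → ℝ}

theorem channel_nonneg (hnn : ∀ a x y, 0 ≤ p a x y) (a : α) (x : β) : 0 ≤ channel p a x :=
  div_nonneg (sum_nonneg fun _ _ => hnn _ _ _)
    (sum_nonneg fun _ _ => sum_nonneg fun _ _ => hnn _ _ _)

theorem sum_channel_le_one (x : β) : ∑ a, channel p a x ≤ 1 := by
  simp only [channel, Matrix.of_apply, ← sum_div]
  exact div_self_le_one _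

theorem channel_mul_sum_eq (hnn : ∀ a x y, 0 ≤ p a x y)
    (hci : ∀ a x y, p a x y * (∑ b, ∑ c, p b x c) = (∑ c, p a x c) * (∑ b, p b x y))
    (a : α) (x : β) (y : γ) : channel p a x * ∑ b, p b x y = p a x y := by
  by_cases hx : ∑ b, ∑ c, p b x c = 0
  · have hzero : p a x y = 0 := by
      rw [sum_eq_zero_iff_of_nonneg fun b _ => sum_nonneg fun c _ => hnn b x c] at hx
      exact (sum_eq_zero_iff_of_nonneg fun c _ => hnn a x c).mp (hx a (mem_univ a)) y
        (mem_univ y)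
    simp [channel, hx, hzero]
  · rw [channel, Matrix.of_apply, div_mul_eq_mul_div, ← hci, mul_div_cancel_right₀ _ hx]

theorem channel_mul_joint [Fintype β] (hnn : ∀ a x y, 0 ≤ p a x y)
    (hci : ∀ a x y, p a x y * (∑ b, ∑ c, p b x c) = (∑ c, p a x c) * (∑ b, p b x y)) :
    channel p * Matrix.of (fun x y => ∑ a, p a x y) = Matrix.of fun a y => ∑ x, p a x y := by
  ext a y
  simp only [Matrix.mul_apply, Matrix.of_apply, channel_mul_sum_eq hnn hci]

end Channel

theorem DMI_information_monotone_general {C : ℕ}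
    (p : Fin C → Fin C → Fin C → ℝ)
    (hnn : ∀ a x y, 0 ≤ p a x y)
    (hci : ∀ a x y,
      p a x y * (∑ b, ∑ c, p b x c) = (∑ c, p a x c) * (∑ b, p b x y)) :
    |(Matrix.of fun a y => ∑ x, p a x y).det| ≤
      |(Matrix.of fun x y => ∑ a, p a x y).det| := by
  have hchannel : |(channel p).det| ≤ 1 :=
    (channel p).abs_det_le_one_of_sum_col_le_one (channel_nonneg hnn) sum_channel_le_one
  rw [← channel_mul_joint hnn hci, Matrix.det_mul, abs_mul]
  exact mul_le_of_le_one_left (abs_nonneg _) hchannel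

/-- Determinant Mutual Information is information-monotone: if `X'` is
conditionally independent of `Y` given `X` (joint pmf `p` of `(X', X, Y)` on a
common size-`C` signal set), then `|det U_{X',Y}| ≤ |det U_{X,Y}|`. -/
theorem DMI_information_monotone {C : ℕ}
    (p : Fin C → Fin C → Fin C → ℝ)
    (hnn : ∀ a x y, 0 ≤ p a x y)
    (hsum : ∑ a, ∑ x, ∑ y, p a x y = 1)
    (hci : ∀ a x y,
      p a x y * (∑ b, ∑ c, p b x c) = (∑ c, p a x c) * (∑ b, p b x y)) :
    |(Matrix.of fun a y => ∑ x, p a x y).det| ≤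
      |(Matrix.of fun x y => ∑ a, p a x y).det| :=
  DMI_information_monotone_general p hnn hci
end

section
/- Let U and U⋆ be C×C joint distribution matrices with unequal column-sum vectors, and set α_{ij} = α·u⋆_{ij}. Then the integral of the Dirichlet-type density w^α(x) = (1/C(α))·∏_{ij} x_{ij}^{α_{ij}−1} over the slice of joint distributions with the same column sums as U is at most ∏_j (u_j/u⋆_j)^{α·u⋆_j − 1}, where u_j, u⋆_j are the j-th column sums of U, U⋆; since ∏_j (u_j/u⋆_j)^{u⋆_j} < 1 when the column-sum vectors differ, this bound tends to 0 as α → ∞. -/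
open MeasureTheory Filter
open scoped ENNReal BigOperators Topology

noncomputable section

variable {C : ℕ}

def IsJointDist (U : Matrix (Fin C) (Fin C) ℝ) : Prop :=
  (∀ i j, 0 ≤ U i j) ∧ ∑ i, ∑ j, U i j = 1

/-- The entry map of a vectorized matrix in Euclidean space. -/
def entry (v : EuclideanSpace ℝ (Fin C × Fin C)) (i j : Fin C) : ℝ :=
  EuclideanSpace.equiv (Fin C × Fin C) ℝ v (i, j)

/-- `sliceSet U`: vectorized joint distribution matrices with the same column sums
as `U`. -/
def sliceSet (U : Matrix (Fin C) (Fin C) ℝ) : Set (EuclideanSpace ℝ (Fin C × Fin C)) :=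
  {v | (∀ i j, 0 ≤ entry v i j) ∧ (∑ i, ∑ j, entry v i j = 1) ∧
    ∀ j, ∑ i, entry v i j = ∑ i, U i j}

/-- The unnormalized Dirichlet-type density `∏_{ij} x_{ij}^{α·u⋆_{ij} − 1}`. -/
def dirDensity (Ustar : Matrix (Fin C) (Fin C) ℝ) (α : ℝ)
    (v : EuclideanSpace ℝ (Fin C × Fin C)) : ℝ :=
  ∏ i, ∏ j, entry v i j ^ (α * Ustar i j - 1)

/-!
Scaling column `j` by `c j = u⋆_j / u_j` maps `sliceSet U` onto `sliceSet U⋆`. Both slices lie in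
translates of the `C (C - 1)`-dimensional space of matrices with zero column sums, on which the
scaling has determinant `∏ c_j ^ (C - 1)`, and it multiplies the density by
`∏ c_j ^ (α u⋆_j - C)`. Hence the integral over `sliceSet U` is exactly
`∏ (u_j / u⋆_j) ^ (α u⋆_j - 1)` times the integral over `sliceSet U⋆`, which is `1`. If some
`u_j = 0`, the slice lies in an affine subspace of smaller dimension and is null. The limit comes
from the strict weighted AM-GM inequality `∏ (u_j / u⋆_j) ^ u⋆_j < ∑ u_j = 1`.
-/

open Module

theorem isometry_add_submodule {E : Type*} [NormedAddCommGroup E] [NormedSpace ℝ E]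
    (W : Submodule ℝ E) (p : E) :
    Isometry fun w : W => p + (w : E) :=
  Isometry.of_dist_eq fun _ _ => by simp [Subtype.dist_eq]

section AffineSubspace

variable {E : Type*} [NormedAddCommGroup E] [NormedSpace ℝ E] [MeasurableSpace E] [BorelSpace E]
  (W : Submodule ℝ E) [FiniteDimensional ℝ W] (p : E)

theorem setLIntegral_hausdorffMeasure_eq_submodule {d : ℝ} (hd : 0 ≤ d) (f : E → ℝ≥0∞)
    {s : Set E} (hs : ∀ v ∈ s, v - p ∈ W) :
    ∫⁻ v in s, f v ∂μH[d] = ∫⁻ w in (fun w : W => p + (w : E)) ⁻¹' s, f (p + w) ∂μH[d] := by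
  have hiso := isometry_add_submodule W p
  have hemb := hiso.isClosedEmbedding.measurableEmbedding
  have hsub : s ⊆ Set.range fun w : W => p + (w : E) := fun v hv =>
    ⟨⟨v - p, hs v hv⟩, add_sub_cancel p v⟩
  rw [← hemb.lintegral_map, ← hemb.restrict_map, hiso.map_hausdorffMeasure (.inl hd),
    Measure.restrict_restrict' hemb.measurableSet_range, Set.inter_eq_left.mpr hsub]

theorem hausdorffMeasure_add_submodule_eq_zero {d : ℝ} (hd : finrank ℝ W < d) :
    μH[d] {v : E | v - p ∈ W} = 0 := by
  have hrange : {v : E | v - p ∈ W} = (fun w : W => p + (w : E)) '' Set.univ := by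
    ext v
    exact ⟨fun hv => ⟨⟨v - p, hv⟩, trivial, add_sub_cancel p v⟩, by rintro ⟨w, -, rfl⟩; simp⟩
  rw [hrange, (isometry_add_submodule W p).hausdorffMeasure_image
    (.inl ((Nat.cast_nonneg _).trans hd.le)), Real.hausdorffMeasure_of_finrank_lt hd,
    Measure.coe_zero, Pi.zero_apply]

end AffineSubspace

theorem setLIntegral_comp_linearMap {F : Type*} [NormedAddCommGroup F] [NormedSpace ℝ F]
    [MeasurableSpace F] [BorelSpace F] [FiniteDimensional ℝ F] (μ : Measure F)
    [μ.IsAddHaarMeasure] {T : F →ₗ[ℝ] F} (hT : LinearMap.det T ≠ 0) (f : F → ℝ≥0∞) (t : Set F) :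
    ∫⁻ x in T ⁻¹' t, f (T x) ∂μ = ENNReal.ofReal |(LinearMap.det T)⁻¹| * ∫⁻ x in t, f x ∂μ := by
  have hemb : MeasurableEmbedding T :=
    (T.equivOfDetNeZero hT).toContinuousLinearEquiv.toHomeomorph.measurableEmbedding
  rw [← hemb.lintegral_map, ← hemb.restrict_map, Measure.map_linearMap_addHaar_eq_smul_addHaar μ hT,
    Measure.restrict_smul, lintegral_smul_measure, smul_eq_mul]

theorem setLIntegral_hausdorffMeasure_comp_linearMap {E : Type*} [NormedAddCommGroup E]
    [NormedSpace ℝ E] [MeasurableSpace E] [BorelSpace E] (W : Submodule ℝ E) [FiniteDimensional ℝ W]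
    {T : E →ₗ[ℝ] E} (hTW : ∀ w ∈ W, T w ∈ W) (hT : LinearMap.det (T.restrict hTW) ≠ 0)
    (p : E) (f : E → ℝ≥0∞) {t : Set E} (hpre : ∀ v ∈ T ⁻¹' t, v - p ∈ W)
    (ht : ∀ v ∈ t, v - T p ∈ W) :
    ∫⁻ v in T ⁻¹' t, f (T v) ∂μH[finrank ℝ W] =
      ENNReal.ofReal |(LinearMap.det (T.restrict hTW))⁻¹| * ∫⁻ v in t, f v ∂μH[finrank ℝ W] := by
  rw [setLIntegral_hausdorffMeasure_eq_submodule W p (Nat.cast_nonneg _) _ hpre,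
    setLIntegral_hausdorffMeasure_eq_submodule W (T p) (Nat.cast_nonneg _) _ ht,
    ← setLIntegral_comp_linearMap _ hT]
  simp only [Set.preimage_preimage, LinearMap.coe_restrict_apply, map_add]

section ColumnOperations

variable {ι κ : Type*}

def colScale (c : κ → ℝ) : EuclideanSpace ℝ (ι × κ) →ₗ[ℝ] EuclideanSpace ℝ (ι × κ) where
  toFun v := WithLp.toLp 2 fun q => c q.2 * v q
  map_add' v w := by ext q; simp [mul_add]
  map_smul' a v := by ext q; simp [mul_left_comm]

@[simp] theorem colScale_apply (c : κ → ℝ) (v : EuclideanSpace ℝ (ι × κ)) (q : ι × κ) :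
    colScale c v q = c q.2 * v q :=
  rfl

variable [Fintype ι]

def colSum : EuclideanSpace ℝ (ι × κ) →ₗ[ℝ] κ → ℝ where
  toFun v j := ∑ i, v (i, j)
  map_add' v w := by ext j; simp [Finset.sum_add_distrib]
  map_smul' a v := by ext j; simp [Finset.mul_sum]

@[simp] theorem colSum_apply (v : EuclideanSpace ℝ (ι × κ)) (j : κ) : colSum v j = ∑ i, v (i, j) :=
  rfl

theorem colSum_colScale (c : κ → ℝ) (v : EuclideanSpace ℝ (ι × κ)) :
    colSum (colScale c v) = c * colSum v := by
  ext j; simp [Finset.mul_sum]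

theorem colSum_toLp_uncurry (U : ι → κ → ℝ) :
    colSum (WithLp.toLp 2 (Function.uncurry U)) = fun j => ∑ i, U i j :=
  rfl

theorem colScale_mem_ker_colSum (c : κ → ℝ) {v : EuclideanSpace ℝ (ι × κ)}
    (hv : v ∈ LinearMap.ker colSum) : colScale c v ∈ LinearMap.ker colSum := by
  rw [LinearMap.mem_ker] at hv ⊢
  rw [colSum_colScale, hv, mul_zero]

end ColumnOperations

section DropFirstRow

variable {κ : Type*} {n : ℕ}

theorem apply_zero_of_mem_ker_colSum {v : EuclideanSpace ℝ (Fin (n + 1) × κ)}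
    (hv : v ∈ LinearMap.ker colSum) (j : κ) : v (0, j) = -∑ k : Fin n, v (k.succ, j) := by
  have := congrFun (LinearMap.mem_ker.mp hv) j
  rw [colSum_apply, Fin.sum_univ_succ, Pi.zero_apply] at this
  linarith

def dropFirstRow : LinearMap.ker (colSum : EuclideanSpace ℝ (Fin (n + 1) × κ) →ₗ[ℝ] κ → ℝ) →ₗ[ℝ]
    κ → Fin n → ℝ where
  toFun v j k := (v : EuclideanSpace ℝ (Fin (n + 1) × κ)) (k.succ, j)
  map_add' _ _ := rfl
  map_smul' _ _ := rfl

theorem dropFirstRow_bijective : Function.Bijective (dropFirstRow (κ := κ) (n := n)) := by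
  constructor
  · rw [injective_iff_map_eq_zero]
    intro v hv
    ext ⟨i, j⟩
    have hrow (k : Fin n) : (v : EuclideanSpace ℝ _) (k.succ, j) = 0 := congrFun (congrFun hv j) k
    cases i using Fin.cases with
    | zero => simp [apply_zero_of_mem_ker_colSum v.2, hrow]
    | succ k => exact hrow k
  · intro x
    refine ⟨⟨WithLp.toLp 2 fun q => Fin.cases (-∑ k, x q.2 k) (fun k => x q.2 k) q.1, ?_⟩, rfl⟩
    ext j
    simp [Fin.sum_univ_succ]

def kerColSumEquiv :
    LinearMap.ker (colSum : EuclideanSpace ℝ (Fin (n + 1) × κ) →ₗ[ℝ] κ → ℝ) ≃ₗ[ℝ] (κ → Fin n → ℝ) :=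
  LinearEquiv.ofBijective dropFirstRow dropFirstRow_bijective

@[simp] theorem kerColSumEquiv_apply
    (v : LinearMap.ker (colSum : EuclideanSpace ℝ (Fin (n + 1) × κ) →ₗ[ℝ] κ → ℝ)) (j : κ) (k : Fin n) :
    kerColSumEquiv v j k = (v : EuclideanSpace ℝ (Fin (n + 1) × κ)) (k.succ, j) :=
  rfl

variable [Fintype κ]

theorem finrank_ker_colSum :
    finrank ℝ (LinearMap.ker (colSum : EuclideanSpace ℝ (Fin (n + 1) × κ) →ₗ[ℝ] κ → ℝ)) =
      Fintype.card κ * n := by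
  simp [kerColSumEquiv.finrank_eq, Module.finrank_pi_fintype]

theorem det_colScale_restrict_ker (c : κ → ℝ) :
    LinearMap.det ((colScale c).restrict (p := LinearMap.ker (colSum :
      EuclideanSpace ℝ (Fin (n + 1) × κ) →ₗ[ℝ] κ → ℝ)) fun _ => colScale_mem_ker_colSum c) =
      ∏ j, c j ^ n := by
  rw [← LinearMap.det_conj _ kerColSumEquiv]
  convert LinearMap.det_pi fun j => c j • (LinearMap.id : (Fin n → ℝ) →ₗ[ℝ] Fin n → ℝ) using 2
  · ext x j k
    obtain ⟨v, rfl⟩ := kerColSumEquiv.surjective x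
    simp [LinearMap.restrict_apply]
  · simp [LinearMap.det_smul]

theorem finrank_ker_colSum_inf_ker_proj_lt (hn : n ≠ 0) (j₀ : κ) :
    finrank ℝ ↥(LinearMap.ker (colSum : EuclideanSpace ℝ (Fin (n + 1) × κ) →ₗ[ℝ] κ → ℝ) ⊓
      LinearMap.ker (EuclideanSpace.proj (𝕜 := ℝ) ((0, j₀) : Fin (n + 1) × κ)).toLinearMap) <
      Fintype.card κ * n := by
  classical
  rw [← finrank_ker_colSum]
  refine Submodule.finrank_lt_finrank_of_lt (lt_of_le_of_ne inf_le_left fun hinf => ?_)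
  set w := kerColSumEquiv.symm fun j (_ : Fin n) => if j = j₀ then (1 : ℝ) else 0
  have hw0 : (w : EuclideanSpace ℝ (Fin (n + 1) × κ)) (0, j₀) = -n := by
    simp [apply_zero_of_mem_ker_colSum w.2, ← kerColSumEquiv_apply, w]
  have hw : (w : EuclideanSpace ℝ (Fin (n + 1) × κ)) ∈ LinearMap.ker
      (EuclideanSpace.proj (𝕜 := ℝ) ((0, j₀) : Fin (n + 1) × κ)).toLinearMap :=
    (hinf.ge w.2).2
  simp [hw0, hn] at hw

end DropFirstRow

theorem entry_apply (v : EuclideanSpace ℝ (Fin C × Fin C)) (i j : Fin C) : entry v i j = v (i, j) :=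
  rfl

theorem measurableSet_sliceSet (U : Matrix (Fin C) (Fin C) ℝ) : MeasurableSet (sliceSet U) := by
  unfold sliceSet
  simp only [entry_apply]
  measurability

theorem mem_sliceSet_iff {U : Matrix (Fin C) (Fin C) ℝ} (hU : ∑ i, ∑ j, U i j = 1)
    {v : EuclideanSpace ℝ (Fin C × Fin C)} :
    v ∈ sliceSet U ↔ (∀ i j, 0 ≤ v (i, j)) ∧ colSum v = fun j => ∑ i, U i j := by
  simp only [sliceSet, entry_apply, funext_iff, colSum_apply]
  refine ⟨fun h => ⟨h.1, h.2.2⟩, fun h => ⟨h.1, ?_, h.2⟩⟩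
  rw [Finset.sum_comm, Finset.sum_congr rfl fun j _ => h.2 j, Finset.sum_comm, hU]

theorem sub_mem_ker_colSum_of_mem_sliceSet {U : Matrix (Fin C) (Fin C) ℝ}
    {v p : EuclideanSpace ℝ (Fin C × Fin C)} (hv : v ∈ sliceSet U)
    (hp : colSum p = fun j => ∑ i, U i j) : v - p ∈ LinearMap.ker colSum := by
  ext j
  simp [Finset.sum_sub_distrib, ← entry_apply, hv.2.2 j, ← congrFun hp j]

theorem colScale_preimage_sliceSet {U U' : Matrix (Fin C) (Fin C) ℝ} (hU : ∑ i, ∑ j, U i j = 1)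
    (hU' : ∑ i, ∑ j, U' i j = 1) {c : Fin C → ℝ} (hc : ∀ j, 0 < c j)
    (hcU : ∀ j, c j * ∑ i, U i j = ∑ i, U' i j) :
    colScale c ⁻¹' sliceSet U' = sliceSet U := by
  ext v
  simp only [Set.mem_preimage, mem_sliceSet_iff hU, mem_sliceSet_iff hU', colScale_apply,
    colSum_colScale, funext_iff, Pi.mul_apply, ← hcU, mul_nonneg_iff_of_pos_left (hc _),
    mul_right_inj' (hc _).ne']

theorem dirDensity_colScale (A : Matrix (Fin C) (Fin C) ℝ) (α : ℝ) {c : Fin C → ℝ}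
    (hc : ∀ j, 0 < c j) {v : EuclideanSpace ℝ (Fin C × Fin C)} (hv : ∀ i j, 0 ≤ v (i, j)) :
    dirDensity A α (colScale c v) =
      (∏ j, c j ^ (α * ∑ i, A i j - C)) * dirDensity A α v := by
  have hcol (j : Fin C) : ∏ i, c j ^ (α * A i j - 1) = c j ^ (α * ∑ i, A i j - C) := by
    rw [← Real.rpow_sum_of_pos (hc j), Finset.sum_sub_distrib, Finset.mul_sum]
    simp
  simp only [dirDensity, entry_apply, colScale_apply, Real.mul_rpow (hc _).le (hv _ _),
    Finset.prod_mul_distrib, ← hcol]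
  rw [Finset.prod_comm]

theorem finrank_ker_colSum_fin {n : ℕ} :
    finrank ℝ (LinearMap.ker (colSum : EuclideanSpace ℝ (Fin (n + 1) × Fin (n + 1)) →ₗ[ℝ] _)) =
      (n + 1) * n := by
  rw [finrank_ker_colSum, Fintype.card_fin]

theorem inv_prod_rpow_mul_inv_prod_pow {κ : Type*} [Fintype κ] {c : κ → ℝ} (hc : ∀ j, 0 < c j)
    (a : κ → ℝ) (m : ℕ) :
    (∏ j, c j ^ (a j - (m + 1 : ℕ)))⁻¹ * (∏ j, c j ^ m)⁻¹ = ∏ j, (c j)⁻¹ ^ (a j - 1) := by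
  rw [← Finset.prod_inv_distrib, ← Finset.prod_inv_distrib, ← Finset.prod_mul_distrib]
  refine Finset.prod_congr rfl fun j _ => ?_
  rw [← Real.rpow_natCast, ← Real.rpow_neg (hc j).le, ← Real.rpow_neg (hc j).le,
    ← Real.rpow_add (hc j), Real.inv_rpow (hc j).le, ← Real.rpow_neg (hc j).le]
  push_cast
  ring_nf

theorem setLIntegral_sliceSet_dirDensity {n : ℕ} {U U' : Matrix (Fin (n + 1)) (Fin (n + 1)) ℝ}
    (hU : ∑ i, ∑ j, U i j = 1) (hU' : ∑ i, ∑ j, U' i j = 1) (hu : ∀ j, 0 < ∑ i, U i j)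
    (hu' : ∀ j, 0 < ∑ i, U' i j) (A : Matrix (Fin (n + 1)) (Fin (n + 1)) ℝ) (α z : ℝ) :
    ∫⁻ v in sliceSet U, ENNReal.ofReal (z * dirDensity A α v) ∂μH[((n + 1) * n : ℕ)] =
      ENNReal.ofReal (∏ j, ((∑ i, U i j) / (∑ i, U' i j)) ^ (α * (∑ i, A i j) - 1)) *
        ∫⁻ v in sliceSet U', ENNReal.ofReal (z * dirDensity A α v) ∂μH[((n + 1) * n : ℕ)] := by
  set c : Fin (n + 1) → ℝ := fun j => (∑ i, U' i j) / ∑ i, U i j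
  have hc (j) : 0 < c j := div_pos (hu' j) (hu j)
  have hcU (j) : c j * ∑ i, U i j = ∑ i, U' i j := div_mul_cancel₀ _ (hu j).ne'
  have hpre := colScale_preimage_sliceSet hU hU' hc hcU
  set k := ∏ j, c j ^ (α * ∑ i, A i j - (n + 1 : ℕ))
  have hk : 0 < k := Finset.prod_pos fun j _ => Real.rpow_pos_of_pos (hc j) _
  have hscale : ∀ v ∈ sliceSet U, ENNReal.ofReal (z * dirDensity A α v) =
      ENNReal.ofReal k⁻¹ * ENNReal.ofReal (z * dirDensity A α (colScale c v)) := by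
    intro v hv
    rw [← ENNReal.ofReal_mul (inv_nonneg.mpr hk.le),
      dirDensity_colScale A α hc ((mem_sliceSet_iff hU).mp hv).1, mul_left_comm z,
      inv_mul_cancel_left₀ hk.ne']
  have hdet := det_colScale_restrict_ker (n := n) c
  have hdet_pos : 0 < ∏ j, c j ^ n := Finset.prod_pos fun j _ => pow_pos (hc j) n
  set p : EuclideanSpace ℝ (Fin (n + 1) × Fin (n + 1)) := WithLp.toLp 2 (Function.uncurry U)
  have hp₀ : colSum p = fun j => ∑ i, U i j := colSum_toLp_uncurry U
  have hp : colSum (colScale c p) = fun j => ∑ i, U' i j := by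
    rw [colSum_colScale, hp₀]
    exact funext hcU
  calc ∫⁻ v in sliceSet U, ENNReal.ofReal (z * dirDensity A α v) ∂μH[((n + 1) * n : ℕ)]
      = ENNReal.ofReal k⁻¹ * ∫⁻ v in colScale c ⁻¹' sliceSet U',
          ENNReal.ofReal (z * dirDensity A α (colScale c v)) ∂μH[((n + 1) * n : ℕ)] := by
        rw [setLIntegral_congr_fun (measurableSet_sliceSet U) hscale,
          lintegral_const_mul' _ _ ENNReal.ofReal_ne_top, hpre]
    _ = ENNReal.ofReal k⁻¹ * (ENNReal.ofReal (∏ j, c j ^ n)⁻¹ *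
          ∫⁻ v in sliceSet U', ENNReal.ofReal (z * dirDensity A α v) ∂μH[((n + 1) * n : ℕ)]) := by
        rw [← finrank_ker_colSum_fin, setLIntegral_hausdorffMeasure_comp_linearMap _ _
          (hdet ▸ hdet_pos.ne') p (fun v => ENNReal.ofReal (z * dirDensity A α v))
          (fun v hv => sub_mem_ker_colSum_of_mem_sliceSet (hpre ▸ hv) hp₀)
          (fun v hv => sub_mem_ker_colSum_of_mem_sliceSet hv hp),
          hdet, abs_of_pos (inv_pos.mpr hdet_pos)]
    _ = _ := by
        rw [← mul_assoc, ← ENNReal.ofReal_mul (inv_nonneg.mpr hk.le), inv_prod_rpow_mul_inv_prod_pow hc]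
        simp only [c, inv_div]

theorem hausdorffMeasure_sliceSet_eq_zero {n : ℕ} (hn : n ≠ 0)
    {U : Matrix (Fin (n + 1)) (Fin (n + 1)) ℝ} (hU : ∀ i j, 0 ≤ U i j) {j₀ : Fin (n + 1)}
    (hj₀ : ∑ i, U i j₀ = 0) : μH[((n + 1) * n : ℕ)] (sliceSet U) = 0 := by
  have hrank := finrank_ker_colSum_inf_ker_proj_lt hn j₀
  rw [Fintype.card_fin] at hrank
  refine measure_mono_null (fun v hv => ?_)
    (hausdorffMeasure_add_submodule_eq_zero _ (WithLp.toLp 2 (Function.uncurry U))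
      (by exact_mod_cast hrank))
  refine ⟨sub_mem_ker_colSum_of_mem_sliceSet hv (colSum_toLp_uncurry U), ?_⟩
  have hzero {x : Fin (n + 1) → ℝ} (hx : ∀ i, 0 ≤ x i) (hx₀ : ∑ i, x i = 0) : x 0 = 0 :=
    (Finset.sum_eq_zero_iff_of_nonneg fun i _ => hx i).mp hx₀ 0 (Finset.mem_univ _)
  have hv0 : v (0, j₀) = 0 := hzero (fun i => hv.1 i j₀) (hv.2.2 j₀ ▸ hj₀)
  have hU0 : U 0 j₀ = 0 := hzero (fun i => hU i j₀) hj₀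
  show v (0, j₀) - U 0 j₀ = 0
  rw [hv0, hU0, sub_zero]

theorem two_le_of_colSums_ne {U U' : Matrix (Fin C) (Fin C) ℝ} (hU : ∑ i, ∑ j, U i j = 1)
    (hU' : ∑ i, ∑ j, U' i j = 1) (hne : (fun j => ∑ i, U i j) ≠ fun j => ∑ i, U' i j) :
    2 ≤ C := by
  by_contra! hC
  have : Subsingleton (Fin C) := Fin.subsingleton_iff_le_one.mpr (by omega)
  have hcols {A : Matrix (Fin C) (Fin C) ℝ} (hA : ∑ i, ∑ j, A i j = 1) (j : Fin C) :
      ∑ i, A i j = 1 := by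
    rw [← Fintype.sum_subsingleton (fun j => ∑ i, A i j) j, ← hA, Finset.sum_comm]
  exact hne (funext fun j => (hcols hU j).trans (hcols hU' j).symm)

theorem tendsto_prod_div_rpow_atTop {κ : Type*} [Fintype κ] {u u' : κ → ℝ} (hu : ∀ j, 0 ≤ u j)
    (hu' : ∀ j, 0 < u' j) (hsum : ∑ j, u j = 1) (hsum' : ∑ j, u' j = 1) (hne : u ≠ u') :
    Tendsto (fun α : ℝ => ∏ j, (u j / u' j) ^ (α * u' j - 1)) atTop (𝓝 0) := by
  have hr (j) : 0 ≤ u j / u' j := div_nonneg (hu j) (hu' j).le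
  have hmean : ∑ j, u' j * (u j / u' j) = 1 := by
    simp_rw [mul_div_cancel₀ _ (hu' _).ne', hsum]
  have hgibbs : ∏ j, (u j / u' j) ^ u' j < 1 := by
    obtain ⟨j, hj⟩ := Function.ne_iff.mp hne
    have := (Real.geom_mean_lt_arith_mean_weighted_iff_of_pos' Finset.univ u' (fun j => u j / u' j)
      (fun j _ => hu' j) hsum' (fun j _ => hr j)).mpr
      ⟨j, Finset.mem_univ _, by rw [hmean, ne_eq, div_eq_one_iff_eq (hu' j).ne']; exact hj⟩
    rwa [hmean] at this
  have heq : ∀ᶠ α : ℝ in atTop, (∏ j, (u j / u' j) ^ u' j) ^ α / ∏ j, u j / u' j =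
      ∏ j, (u j / u' j) ^ (α * u' j - 1) := by
    filter_upwards [eventually_all.mpr fun j => eventually_gt_atTop (u' j)⁻¹] with α hα
    rw [← Real.finsetProd_rpow _ _ fun j _ => Real.rpow_nonneg (hr j) _, ← Finset.prod_div_distrib]
    refine Finset.prod_congr rfl fun j _ => ?_
    have : α * u' j - 1 ≠ 0 := by
      have := (inv_lt_iff_one_lt_mul₀' (hu' j)).mp (hα j)
      linarith
    rw [Real.rpow_sub' (hr j) this, Real.rpow_one, ← Real.rpow_mul (hr j), mul_comm]
  have hq : 0 ≤ ∏ j, (u j / u' j) ^ u' j := Finset.prod_nonneg fun j _ => Real.rpow_nonneg (hr j) _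
  refine Tendsto.congr' heq ?_
  simpa using (tendsto_rpow_atTop_of_base_lt_one _ (by linarith) hgibbs).div_const
    (∏ j, u j / u' j)

theorem dirichlet_density_slice_bound_general (U Ustar : Matrix (Fin C) (Fin C) ℝ)
    (hU : IsJointDist U) (hUstar : IsJointDist Ustar)
    (hpos : ∀ i j, 0 < Ustar i j)
    (hcols : (fun j => ∑ i, U i j) ≠ fun j => ∑ i, Ustar i j)
    (Z : ℝ → ℝ)
    -- `Z α` is the normalizing constant: the density integrates to 1 over `sliceSet U⋆`
    (hZ : ∀ α, 0 < α →
      ∫⁻ v in sliceSet Ustar, ENNReal.ofReal ((Z α)⁻¹ * dirDensity Ustar α v)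
          ∂(μH[(C * (C - 1) : ℕ)]) = 1) :
    (∀ α, 0 < α →
      ∫⁻ v in sliceSet U, ENNReal.ofReal ((Z α)⁻¹ * dirDensity Ustar α v)
          ∂(μH[(C * (C - 1) : ℕ)]) ≤
        ENNReal.ofReal
          (∏ j, ((∑ i, U i j) / (∑ i, Ustar i j)) ^ (α * (∑ i, Ustar i j) - 1))) ∧
    Tendsto
      (fun α : ℝ =>
        ∏ j, ((∑ i, U i j) / (∑ i, Ustar i j)) ^ (α * (∑ i, Ustar i j) - 1))
      atTop (𝓝 0) := by
  have hC := two_le_of_colSums_ne hU.2 hUstar.2 hcols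
  obtain ⟨n, rfl⟩ : ∃ n, C = n + 1 := ⟨C - 1, by omega⟩
  have hu (j) : 0 ≤ ∑ i, U i j := Finset.sum_nonneg fun i _ => hU.1 i j
  have hu' (j) : 0 < ∑ i, Ustar i j := Finset.sum_pos (fun i _ => hpos i j) Finset.univ_nonempty
  refine ⟨fun α hα => ?_, tendsto_prod_div_rpow_atTop hu hu' (Finset.sum_comm.trans hU.2)
    (Finset.sum_comm.trans hUstar.2) hcols⟩
  rw [Nat.add_sub_cancel] at hZ ⊢
  by_cases hupos : ∀ j, 0 < ∑ i, U i j
  · rw [setLIntegral_sliceSet_dirDensity hU.2 hUstar.2 hupos hu', hZ α hα, mul_one]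
  · obtain ⟨j₀, hj₀⟩ := not_forall.mp hupos
    rw [setLIntegral_measure_zero _ _ (hausdorffMeasure_sliceSet_eq_zero (by omega) hU.1
      (le_antisymm (not_lt.mp hj₀) (hu j₀)))]
    exact zero_le

/-- if `U` and `U⋆` are joint distribution matrices with unequal
column-sum vectors, then the integral of the normalized Dirichlet-type density
`w^α = (1/C(α))·∏ x_{ij}^{α u⋆_{ij}−1}` over `sliceSet(U)` is at most
`∏_j (u_j/u⋆_j)^{α u⋆_j − 1}`, and this bound tends to `0` as `α → ∞`. -/
theorem dirichlet_density_slice_bound (U Ustar : Matrix (Fin C) (Fin C) ℝ)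
    (hU : IsJointDist U) (hUstar : IsJointDist Ustar)
    (hpos : ∀ i j, 0 < Ustar i j)
    (hcols : (fun j => ∑ i, U i j) ≠ fun j => ∑ i, Ustar i j)
    (Z : ℝ → ℝ) (hZpos : ∀ α, 0 < α → 0 < Z α)
    -- `Z α` is the normalizing constant: the density integrates to 1 over `sliceSet U⋆`
    (hZ : ∀ α, 0 < α →
      ∫⁻ v in sliceSet Ustar, ENNReal.ofReal ((Z α)⁻¹ * dirDensity Ustar α v)
          ∂(μH[(C * (C - 1) : ℕ)]) = 1) :
    (∀ α, 0 < α →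
      ∫⁻ v in sliceSet U, ENNReal.ofReal ((Z α)⁻¹ * dirDensity Ustar α v)
          ∂(μH[(C * (C - 1) : ℕ)]) ≤
        ENNReal.ofReal
          (∏ j, ((∑ i, U i j) / (∑ i, Ustar i j)) ^ (α * (∑ i, Ustar i j) - 1))) ∧
    Tendsto
      (fun α : ℝ =>
        ∏ j, ((∑ i, U i j) / (∑ i, Ustar i j)) ^ (α * (∑ i, Ustar i j) - 1))
      atTop (𝓝 0) :=
  dirichlet_density_slice_bound_general U Ustar hU hUstar hpos hcols Z hZ

end
end
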